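/- arXiv:2211.17241 — 2 statements merged into one kernel-verified Lean document; each statement's English description precedes it below -/
import Mathlib

section
/- There exists a number r₀ > 0 such that for every T_max ∈ (t₀, ∞) and every C¹ function y : [t₀, T_max) → ℝⁿ with y(t) ≠ 0 for all t ∈ [t₀, T_max), 0 < |y(t₀)| ≤ r₀, satisfying y'(t) = −H(y(t))·(A y(t)) + G(t, y(t)) for all t ∈ (t₀, T_max), and satisfying the escape property (for every compact set U ⊆ ℝⁿ∖{0} there exists τ ∈ [t₀, T_max) such that y(t) ∉ U for all t ∈ (τ, T_max)), one has lim_{t → T_max⁻} y(t) = 0; that is, T_max is the extinction time of y. -/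
open Set Real Filter Topology MeasureTheory

noncomputable section

/-- The action of an `n × n` real matrix on `EuclideanSpace ℝ (Fin n)` by
matrix-vector multiplication. -/
def mulVecE {n : ℕ} (A : Matrix (Fin n) (Fin n) ℝ) (x : EuclideanSpace ℝ (Fin n)) :
    EuclideanSpace ℝ (Fin n) :=
  WithLp.toLp 2 (A.mulVec x)

/-! In the coordinates `z = S x`, in which `A` becomes the positive diagonal matrix `D`,
`V x = ‖S x‖²` is a Lyapunov function near `0`: the drift `-H(x) A x` decreases `V` at rate
`≳ ‖x‖^(-α) V`, and this dominates the contribution `O(‖x‖^(1-α+δ) ‖S x‖)` of the perturbation `G`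
once `‖x‖` is small. So a solution starting close enough to `0` stays forever in a fixed closed
ball around `0`; a trajectory confined to that compact ball which eventually leaves every compact
subset of `ℝⁿ \ {0}` must tend to `0`. -/

open Metric Matrix
open scoped RealInnerProductSpace

theorem exists_pos_forall_le_of_finite {ι : Type*} [Finite ι] {d : ι → ℝ}
    (hd : ∀ i, 0 < d i) : ∃ c > 0, ∀ i, c ≤ d i := by
  -- points of `Ioi 0` close enough to `0` lie below each of the finitely many `d i`
  obtain ⟨c, hcd, hc⟩ := (((eventually_all.2 fun i => eventually_le_nhds (hd i)).filter_mono
    nhdsWithin_le_nhds).and (self_mem_nhdsWithin (s := Ioi (0 : ℝ)))).exists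
  exact ⟨c, hc, hcd⟩

theorem exists_pos_mul_norm_sq_le_inner_diagonal {ι : Type*} [Fintype ι] [DecidableEq ι]
    {d : ι → ℝ} (hd : ∀ i, 0 < d i) :
    ∃ c > 0, ∀ z : EuclideanSpace ℝ ι,
      c * ‖z‖ ^ 2 ≤ ⟪z, toEuclideanCLM (𝕜 := ℝ) (diagonal d) z⟫ := by
  obtain ⟨c, hc, hcd⟩ := exists_pos_forall_le_of_finite hd
  refine ⟨c, hc, fun z => ?_⟩
  rw [EuclideanSpace.real_norm_sq_eq, Finset.mul_sum, inner_toEuclideanCLM]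
  simp only [dotProduct, mulVec_diagonal]
  exact Finset.sum_le_sum fun i _ => by nlinarith [hcd i, sq_nonneg (z i)]

theorem exists_toEuclideanCLM_conj_coercive {ι : Type*} [Fintype ι] [DecidableEq ι]
    {A : Matrix ι ι ℝ}
    (hA : ∃ S D : Matrix ι ι ℝ, IsUnit S ∧ D.IsDiag ∧ (∀ i, 0 < D i i) ∧ A = S⁻¹ * D * S) :
    ∃ s d : EuclideanSpace ℝ ι →L[ℝ] EuclideanSpace ℝ ι,
      s * toEuclideanCLM (𝕜 := ℝ) A = d * s ∧ (∃ C > 0, ∀ x, ‖x‖ ≤ C * ‖s x‖) ∧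
      ∃ c > 0, ∀ z, c * ‖z‖ ^ 2 ≤ ⟪z, d z⟫ := by
  obtain ⟨S, D, hS, hD, hDpos, rfl⟩ := hA
  have hdet := (isUnit_iff_isUnit_det S).1 hS
  obtain ⟨C, hC, hinv⟩ := (toEuclideanCLM (𝕜 := ℝ) S⁻¹).bound
  refine ⟨toEuclideanCLM (𝕜 := ℝ) S, toEuclideanCLM (𝕜 := ℝ) D, ?_, ⟨C, hC, fun x => ?_⟩, ?_⟩
  · simp only [← map_mul, ← Matrix.mul_assoc, mul_nonsing_inv S hdet, Matrix.one_mul]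
  · calc ‖x‖ = ‖toEuclideanCLM (𝕜 := ℝ) S⁻¹ (toEuclideanCLM (𝕜 := ℝ) S x)‖ := by
          rw [← mul_apply_eq_comp, ← map_mul, nonsing_inv_mul S hdet, map_one, one_apply_eq_self]
      _ ≤ C * ‖toEuclideanCLM (𝕜 := ℝ) S x‖ := hinv _
  · rw [← hD.diagonal_diag]
    exact exists_pos_mul_norm_sq_le_inner_diagonal hDpos

theorem exists_pos_mul_rpow_le_of_homogeneous {E : Type*} [NormedAddCommGroup E]
    [NormedSpace ℝ E] [ProperSpace E] {H : E → ℝ} {α : ℝ}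
    (hHhom : ∀ x : E, x ≠ 0 → ∀ s : ℝ, 0 < s → H (s • x) = s ^ (-α) * H x)
    (hHpos : ∀ x : E, x ≠ 0 → 0 < H x) (hHcont : ContinuousOn H {x : E | x ≠ 0}) :
    ∃ c > 0, ∀ x : E, x ≠ 0 → c * ‖x‖ ^ (-α) ≤ H x := by
  rcases subsingleton_or_nontrivial E with hE | hE
  · exact ⟨1, one_pos, fun x hx => absurd (Subsingleton.elim x 0) hx⟩
  have hsphere : sphere (0 : E) 1 ⊆ {x | x ≠ 0} := fun x hx =>
    ne_zero_of_mem_unit_sphere ⟨x, hx⟩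
  obtain ⟨u, hu, hmin⟩ := (isCompact_sphere (0 : E) 1).exists_isMinOn
    (NormedSpace.sphere_nonempty.2 zero_le_one) (hHcont.mono hsphere)
  refine ⟨H u, hHpos u (hsphere hu), fun x hx => ?_⟩
  have hx' : 0 < ‖x‖ := norm_pos_iff.2 hx
  have hunit : ‖x‖⁻¹ • x ∈ sphere (0 : E) 1 := by simp [norm_smul, hx'.ne']
  calc H u * ‖x‖ ^ (-α) ≤ H (‖x‖⁻¹ • x) * ‖x‖ ^ (-α) := by gcongr; exact hmin hunit
    _ = H x := by
      rw [mul_comm, ← hHhom _ (hsphere hunit) _ hx', smul_inv_smul₀ hx'.ne']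

theorem exists_radius_mul_norm_le_mul_mul_norm {E : Type*} [NormedAddCommGroup E] {H : E → ℝ}
    {G : ℝ → E → E} {α δ c cs rs t₀ K κ : ℝ} (hK : 0 ≤ K) (hκ : 0 < κ) (hc : 0 < c)
    (hδ : 0 < δ) (hrs : 0 < rs) (hH : ∀ x : E, x ≠ 0 → c * ‖x‖ ^ (-α) ≤ H x)
    (hG : ∀ t, t₀ ≤ t → ∀ x : E, x ≠ 0 → ‖x‖ ≤ rs → ‖G t x‖ ≤ cs * ‖x‖ ^ (1 - α + δ)) :
    ∃ ρ > 0, ∀ t, t₀ ≤ t → ∀ x : E, x ≠ 0 → ‖x‖ ≤ ρ → K * ‖G t x‖ ≤ κ * H x * ‖x‖ := by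
  have hlim : Tendsto (fun r : ℝ => K * cs * r ^ δ) (𝓝 0) (𝓝 (K * cs * 0 ^ δ)) :=
    ((continuousAt_rpow_const 0 δ (Or.inr hδ.le)).const_mul _).tendsto
  rw [zero_rpow hδ.ne', mul_zero] at hlim
  obtain ⟨ε, hε, hsmall⟩ :=
    Metric.eventually_nhds_iff.1 (hlim.eventually (gt_mem_nhds (mul_pos hκ hc)))
  refine ⟨min (ε / 2) rs, by positivity, fun t ht x hx hxρ => ?_⟩
  have hx' : 0 < ‖x‖ := norm_pos_iff.2 hx
  have hxε : K * cs * ‖x‖ ^ δ < κ * c := hsmall <| by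
    rw [dist_zero_right, norm_norm]; linarith [min_le_left (ε / 2) rs]
  calc K * ‖G t x‖ ≤ K * (cs * ‖x‖ ^ (1 - α + δ)) := by
        gcongr; exact hG t ht x hx (hxρ.trans (min_le_right _ _))
    _ = K * cs * ‖x‖ ^ δ * (‖x‖ ^ (-α) * ‖x‖) := by
        rw [show 1 - α + δ = δ + (-α + 1) by ring, rpow_add hx', rpow_add hx', rpow_one]; ring
    _ ≤ κ * c * (‖x‖ ^ (-α) * ‖x‖) := by gcongr
    _ ≤ κ * H x * ‖x‖ := by
        rw [mul_assoc κ c, ← mul_assoc c, mul_assoc κ]; gcongr; exact hH x hx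

theorem inner_map_neg_smul_add_nonpos {F : Type*} [NormedAddCommGroup F]
    [InnerProductSpace ℝ F]
    {s a d : F →L[ℝ] F} (hsad : s * a = d * s) {c C₁ C₂ : ℝ} (hc : 0 ≤ c) (hC₂ : 0 < C₂)
    (hd : ∀ z, c * ‖z‖ ^ 2 ≤ ⟪z, d z⟫) (hs : ∀ x, ‖s x‖ ≤ C₁ * ‖x‖)
    (hs' : ∀ x, ‖x‖ ≤ C₂ * ‖s x‖) {x g : F} {h : ℝ} (hh : 0 ≤ h)
    (hg : C₁ * C₂ * ‖g‖ ≤ c * h * ‖x‖) : ⟪s x, s (-h • a x + g)⟫ ≤ 0 := by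
  have hsa : s (a x) = d (s x) := congr($hsad x)
  have hgs : C₁ * ‖g‖ ≤ c * h * ‖s x‖ := by
    refine le_of_mul_le_mul_left ?_ hC₂
    calc C₂ * (C₁ * ‖g‖) = C₁ * C₂ * ‖g‖ := by ring
      _ ≤ c * h * (C₂ * ‖s x‖) := hg.trans (by gcongr; exact hs' x)
      _ = C₂ * (c * h * ‖s x‖) := by ring
  rw [map_add, map_smul, hsa, inner_add_right, real_inner_smul_right]
  calc -h * ⟪s x, d (s x)⟫ + ⟪s x, s g⟫ ≤ -h * (c * ‖s x‖ ^ 2) + ‖s x‖ * (C₁ * ‖g‖) := by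
        gcongr ?_ + ?_
        · exact mul_le_mul_of_nonpos_left (hd _) (neg_nonpos.2 hh)
        · exact (real_inner_le_norm _ _).trans (by gcongr; exact hs g)
    _ ≤ 0 := by nlinarith [norm_nonneg (s x)]

theorem forall_lt_of_hasDerivAt_nonpos_of_lt {f f' : ℝ → ℝ} {a T b : ℝ}
    (hf : ContinuousOn f (Ico a T)) (hf' : ∀ t ∈ Ioo a T, HasDerivAt f (f' t) t)
    (hneg : ∀ t ∈ Ioo a T, f t < b → f' t ≤ 0) (ha : f a < b) : ∀ t ∈ Ico a T, f t < b := by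
  intro t ht
  by_contra! hbt
  set K := Icc a t ∩ f ⁻¹' Ici b
  have hbdd : BddBelow K := ⟨a, fun s hs => hs.1.1⟩
  have hK : IsClosed K :=
    (hf.mono (Icc_subset_Ico_right ht.2)).preimage_isClosed_of_isClosed isClosed_Icc
      isClosed_Ici
  obtain ⟨⟨ha_le_t₁, ht₁t⟩, hbt₁⟩ := hK.csInf_mem ⟨t, ⟨ht.1, le_rfl⟩, hbt⟩ hbdd
  have ha_lt_t₁ : a < sInf K :=
    ha_le_t₁.lt_of_ne fun h => by rw [← h] at hbt₁; exact (ha.trans_le hbt₁).false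
  set t₁ := sInf K
  have hsub : Icc a t₁ ⊆ Ico a T := Icc_subset_Ico_right (ht₁t.trans_lt ht.2)
  have hsub' : Ioo a t₁ ⊆ Ioo a T := Ioo_subset_Ioo_right (ht₁t.trans ht.2.le)
  have hbefore : ∀ s ∈ Ioo a t₁, f s < b := fun s hs =>
    not_le.1 fun hbs => (csInf_le hbdd ⟨⟨hs.1.le, hs.2.le.trans ht₁t⟩, hbs⟩).not_gt hs.2
  have hanti : AntitoneOn f (Icc a t₁) := by
    refine antitoneOn_of_deriv_nonpos (convex_Icc a t₁) (hf.mono hsub) ?_ ?_ <;>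
      rw [interior_Icc]
    · exact fun s hs => (hf' s (hsub' hs)).differentiableAt.differentiableWithinAt
    · exact fun s hs => (hf' s (hsub' hs)).deriv ▸ hneg s (hsub' hs) (hbefore s hs)
  exact (hanti ⟨le_rfl, ha_lt_t₁.le⟩ ⟨ha_lt_t₁.le, le_rfl⟩ ha_lt_t₁.le).not_gt (ha.trans_le hbt₁)

theorem tendsto_nhds_zero_of_norm_le_of_escapes {E : Type*} [NormedAddCommGroup E]
    [ProperSpace E] {y : ℝ → E} {a T ρ : ℝ} (hy : ∀ t ∈ Ico a T, ‖y t‖ ≤ ρ)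
    (hesc : ∀ U : Set E, IsCompact U → U ⊆ {x | x ≠ 0} →
      ∃ τ ∈ Ico a T, ∀ t ∈ Ioo τ T, y t ∉ U) :
    Tendsto y (𝓝[<] T) (𝓝 0) := by
  refine NormedAddGroup.tendsto_nhds_zero.2 fun ε hε => ?_
  obtain ⟨τ, hτ, hout⟩ := hesc (closedBall 0 ρ \ ball 0 ε)
    ((isCompact_closedBall 0 ρ).diff isOpen_ball) fun x hx h0 => hx.2 (h0 ▸ mem_ball_self hε)
  filter_upwards [Ioo_mem_nhdsLT hτ.2] with t ht
  by_contra! hεt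
  exact hout t ht
    ⟨mem_closedBall_zero_iff.2 (hy t ⟨hτ.1.trans ht.1.le, ht.2⟩), by simpa using hεt⟩

theorem tmax_is_extinction_time_general (n : ℕ)
    (A : Matrix (Fin n) (Fin n) ℝ)
    (hA : ∃ S D : Matrix (Fin n) (Fin n) ℝ, IsUnit S ∧ D.IsDiag ∧
      (∀ i, 0 < D i i) ∧ A = S⁻¹ * D * S)
    (α : ℝ)
    (H : EuclideanSpace ℝ (Fin n) → ℝ)
    (hHhom : ∀ x : EuclideanSpace ℝ (Fin n), x ≠ 0 → ∀ s : ℝ, 0 < s →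
      H (s • x) = s ^ (-α) * H x)
    (hHpos : ∀ x : EuclideanSpace ℝ (Fin n), x ≠ 0 → 0 < H x)
    (hHcont : ContinuousOn H {x : EuclideanSpace ℝ (Fin n) | x ≠ 0})
    (t₀ : ℝ)
    (G : ℝ → EuclideanSpace ℝ (Fin n) → EuclideanSpace ℝ (Fin n))
    (cs rs δ : ℝ) (hrs : 0 < rs) (hδ : 0 < δ)
    (hG : ∀ t, t₀ ≤ t → ∀ x : EuclideanSpace ℝ (Fin n), x ≠ 0 → ‖x‖ ≤ rs →
      ‖G t x‖ ≤ cs * ‖x‖ ^ (1 - α + δ))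
    :
    ∃ r₀ : ℝ, 0 < r₀ ∧
      ∀ Tmax : ℝ, t₀ < Tmax →
      ∀ y : ℝ → EuclideanSpace ℝ (Fin n),
        ContinuousOn y (Ico t₀ Tmax) →
        (∀ t ∈ Ico t₀ Tmax, y t ≠ 0) →
        (0 < ‖y t₀‖ ∧ ‖y t₀‖ ≤ r₀) →
        (∀ t ∈ Ioo t₀ Tmax, HasDerivAt y (-(H (y t)) • mulVecE A (y t) + G t (y t)) t) →
        (∀ U : Set (EuclideanSpace ℝ (Fin n)), IsCompact U →
          U ⊆ {x : EuclideanSpace ℝ (Fin n) | x ≠ 0} →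
          ∃ τ ∈ Ico t₀ Tmax, ∀ t ∈ Ioo τ Tmax, y t ∉ U) →
        Tendsto y (𝓝[<] Tmax) (𝓝 0) := by
  obtain ⟨s, d, hsad, ⟨C₂, hC₂, hs'⟩, c, hc, hd⟩ := exists_toEuclideanCLM_conj_coercive hA
  obtain ⟨C₁, hC₁, hs⟩ := s.bound
  obtain ⟨cH, hcH, hHlow⟩ := exists_pos_mul_rpow_le_of_homogeneous hHhom hHpos hHcont
  obtain ⟨ρ, hρ, hGdom⟩ :=
    exists_radius_mul_norm_le_mul_mul_norm (K := C₁ * C₂) (by positivity) hc hcH hδ hrs hHlow hG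
  have hdecay : ∀ t, t₀ ≤ t → ∀ x, x ≠ 0 → ‖x‖ ≤ ρ →
      ⟪s x, s (-(H x) • mulVecE A x + G t x)⟫ ≤ 0 := fun t ht x hx hxρ =>
    inner_map_neg_smul_add_nonpos hsad hc.le hC₂ hd hs hs' (hHpos x hx).le
      (hGdom t ht x hx hxρ)
  have hball : ∀ x, ‖s x‖ ^ 2 < (ρ / C₂) ^ 2 → ‖x‖ < ρ := fun x hx => calc
    ‖x‖ ≤ C₂ * ‖s x‖ := hs' x
    _ < C₂ * (ρ / C₂) := by
      gcongr; exact (pow_lt_pow_iff_left₀ (norm_nonneg _) (by positivity) two_ne_zero).1 hx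
    _ = ρ := mul_div_cancel₀ ρ hC₂.ne'
  refine ⟨ρ / (2 * C₁ * C₂), by positivity, fun Tmax hT y hyc hyne ⟨_, hy₀⟩ hy' hesc => ?_⟩
  have hinit : ‖s (y t₀)‖ < ρ / C₂ := calc
    ‖s (y t₀)‖ ≤ C₁ * (ρ / (2 * C₁ * C₂)) := (hs _).trans (by gcongr)
    _ < ρ / C₂ := by field_simp; linarith
  have hV : ∀ t ∈ Ico t₀ Tmax, ‖s (y t)‖ ^ 2 < (ρ / C₂) ^ 2 :=
    forall_lt_of_hasDerivAt_nonpos_of_lt ((s.continuous.comp_continuousOn hyc).norm.pow 2)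
      (fun t ht => (s.hasFDerivAt.comp_hasDerivAt t (hy' t ht)).norm_sq)
      (fun t ht hVt => mul_nonpos_of_nonneg_of_nonpos zero_le_two
        (hdecay t ht.1.le _ (hyne t (Ioo_subset_Ico_self ht)) (hball _ hVt).le))
      (by gcongr)
  exact tendsto_nhds_zero_of_norm_le_of_escapes (fun t ht => (hball _ (hV t ht)).le) hesc

theorem tmax_is_extinction_time (n : ℕ) (hn : 1 ≤ n)
    (A : Matrix (Fin n) (Fin n) ℝ)
    (hA : ∃ S D : Matrix (Fin n) (Fin n) ℝ, IsUnit S ∧ D.IsDiag ∧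
      (∀ i, 0 < D i i) ∧ A = S⁻¹ * D * S)
    (α : ℝ) (hα : 0 < α)
    (H : EuclideanSpace ℝ (Fin n) → ℝ)
    (hHhom : ∀ x : EuclideanSpace ℝ (Fin n), x ≠ 0 → ∀ s : ℝ, 0 < s →
      H (s • x) = s ^ (-α) * H x)
    (hHpos : ∀ x : EuclideanSpace ℝ (Fin n), x ≠ 0 → 0 < H x)
    (hHcont : ContinuousOn H {x : EuclideanSpace ℝ (Fin n) | x ≠ 0})
    (t₀ : ℝ) (ht₀ : 0 ≤ t₀)
    (G : ℝ → EuclideanSpace ℝ (Fin n) → EuclideanSpace ℝ (Fin n))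
    (hGcont : ContinuousOn (fun p : ℝ × EuclideanSpace ℝ (Fin n) => G p.1 p.2)
      ((Ici t₀) ×ˢ {x : EuclideanSpace ℝ (Fin n) | x ≠ 0}))
    (cs rs δ : ℝ) (hcs : 0 < cs) (hrs : 0 < rs) (hδ : 0 < δ)
    (hG : ∀ t, t₀ ≤ t → ∀ x : EuclideanSpace ℝ (Fin n), x ≠ 0 → ‖x‖ ≤ rs →
      ‖G t x‖ ≤ cs * ‖x‖ ^ (1 - α + δ))
    :
    ∃ r₀ : ℝ, 0 < r₀ ∧
      ∀ Tmax : ℝ, t₀ < Tmax →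
      ∀ y : ℝ → EuclideanSpace ℝ (Fin n),
        ContinuousOn y (Ico t₀ Tmax) →
        (∀ t ∈ Ico t₀ Tmax, y t ≠ 0) →
        (0 < ‖y t₀‖ ∧ ‖y t₀‖ ≤ r₀) →
        (∀ t ∈ Ioo t₀ Tmax, HasDerivAt y (-(H (y t)) • mulVecE A (y t) + G t (y t)) t) →
        (∀ U : Set (EuclideanSpace ℝ (Fin n)), IsCompact U →
          U ⊆ {x : EuclideanSpace ℝ (Fin n) | x ≠ 0} →
          ∃ τ ∈ Ico t₀ Tmax, ∀ t ∈ Ioo τ Tmax, y t ∉ U) →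
        Tendsto y (𝓝[<] Tmax) (𝓝 0) :=
  tmax_is_extinction_time_general n A hA α H hHhom hHpos hHcont t₀ G cs rs δ hrs hδ hG
end
end

section
/- Let r₀ > 0 satisfy c*(2r₀)^δ ≤ c₁Λ₁/2 and 2r₀ ≤ r*. Then for every T ∈ (t₀, ∞] and every C¹ function y : [t₀, T) → ℝⁿ with y(t) ≠ 0 for all t ∈ [t₀, T), |y(t₀)| ≤ r₀, and y'(t) = −H(y(t))·(A y(t)) + G(t, y(t)) for all t ∈ (t₀, T), one has |y(t)| < 2r₀ for all t ∈ [t₀, T) and |y(t)|^α ≤ |y(t₀)|^α − α·(c₁Λ₁/2)·(t − t₀) for all t ∈ [t₀, T). -/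
open Set Real Filter Topology MeasureTheory

noncomputable section

/-!
Along a solution staying in the ball of radius `2 r₀`, coercivity of `A`, the lower bound
`H x ≥ c₁ |x|^(-α)` and the smallness of `G` give `y · y' ≤ -(c₁ Λ₁ / 2) |y|^(2 - α)`, that is
`(|y|^α)' ≤ -α c₁ Λ₁ / 2`. Integrating shows `|y|` never exceeds `|y(t₀)| ≤ r₀`, so a first
exit time from the ball of radius `2 r₀` cannot exist, and the decay estimate holds throughout.
-/

section InnerProductSpace

open scoped InnerProductSpace

variable {E : Type*} [NormedAddCommGroup E] [InnerProductSpace ℝ E]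

theorem mul_norm_rpow_neg_le_of_homogeneous {H : E → ℝ} {α c : ℝ}
    (hhom : ∀ x : E, x ≠ 0 → ∀ s : ℝ, 0 < s → H (s • x) = s ^ (-α) * H x)
    (hc : ∀ x : E, ‖x‖ = 1 → c ≤ H x) {x : E} (hx : x ≠ 0) :
    c * ‖x‖ ^ (-α) ≤ H x := by
  have hxn : 0 < ‖x‖ := norm_pos_iff.mpr hx
  have hscale : H x = ‖x‖ ^ (-α) * H (‖x‖⁻¹ • x) := by
    rw [← hhom _ (smul_ne_zero (inv_ne_zero hxn.ne') hx) _ hxn, smul_inv_smul₀ hxn.ne']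
  rw [hscale, mul_comm c]
  exact mul_le_mul_of_nonneg_left (hc _ (norm_smul_inv_norm hx)) (by positivity)

theorem inner_neg_smul_add_le {x a g : E} {h c Λ cs α δ : ℝ} (hx : x ≠ 0)
    (hc : 0 ≤ c) (hΛ : 0 ≤ Λ) (hh : c * ‖x‖ ^ (-α) ≤ h) (ha : Λ * ‖x‖ ^ 2 ≤ ⟪x, a⟫_ℝ)
    (hg : ‖g‖ ≤ cs * ‖x‖ ^ (1 - α + δ)) (hsmall : cs * ‖x‖ ^ δ ≤ c * Λ / 2) :
    ⟪x, -h • a + g⟫_ℝ ≤ -(c * Λ / 2) * ‖x‖ ^ (2 - α) := by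
  have hxn : 0 < ‖x‖ := norm_pos_iff.mpr hx
  have hpow_drift : ‖x‖ ^ (-α) * ‖x‖ ^ 2 = ‖x‖ ^ (2 - α) := by
    rw [← rpow_natCast, ← rpow_add hxn]
    ring_nf
  have hpow_perturb : ‖x‖ * ‖x‖ ^ (1 - α + δ) = ‖x‖ ^ δ * ‖x‖ ^ (2 - α) := by
    rw [← rpow_add hxn, mul_comm, ← rpow_add_one hxn.ne']
    ring_nf
  have hdrift : c * Λ * ‖x‖ ^ (2 - α) ≤ h * ⟪x, a⟫_ℝ :=
    calc c * Λ * ‖x‖ ^ (2 - α) = c * ‖x‖ ^ (-α) * (Λ * ‖x‖ ^ 2) := by rw [← hpow_drift]; ring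
      _ ≤ h * ⟪x, a⟫_ℝ := mul_le_mul hh ha (by positivity) ((mul_nonneg hc (rpow_nonneg hxn.le _)).trans hh)
  have hperturb : ⟪x, g⟫_ℝ ≤ c * Λ / 2 * ‖x‖ ^ (2 - α) :=
    calc ⟪x, g⟫_ℝ ≤ ‖x‖ * ‖g‖ := real_inner_le_norm _ _
      _ ≤ ‖x‖ * (cs * ‖x‖ ^ (1 - α + δ)) := by gcongr
      _ = cs * ‖x‖ ^ δ * ‖x‖ ^ (2 - α) := by rw [mul_left_comm, hpow_perturb]; ring
      _ ≤ c * Λ / 2 * ‖x‖ ^ (2 - α) := by gcongr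
  rw [inner_add_right, real_inner_smul_right]
  linarith

theorem HasDerivAt.norm_rpow {y : ℝ → E} {v : E} {t : ℝ} (α : ℝ) (hy : HasDerivAt y v t)
    (hyt : y t ≠ 0) :
    HasDerivAt (fun s => ‖y s‖ ^ α) (α * ‖y t‖ ^ (α - 2) * ⟪y t, v⟫_ℝ) t := by
  have hsq_rpow : ∀ s, (‖y s‖ ^ 2) ^ (α / 2) = ‖y s‖ ^ α := fun s => by
    rw [← rpow_natCast_mul (norm_nonneg _)]
    ring_nf
  have := hy.norm_sq.rpow_const (p := α / 2) (Or.inl (by positivity))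
  simp only [hsq_rpow] at this
  convert this using 1
  rw [← rpow_natCast_mul (norm_nonneg _)]
  ring_nf

theorem norm_rpow_le_of_inner_deriv_le {y y' : ℝ → E} {a b α c : ℝ} (hα : 0 < α) (hab : a ≤ b)
    (hy : ContinuousOn y (Icc a b))
    (hderiv : ∀ s ∈ Ioo a b,
      y s ≠ 0 ∧ HasDerivAt y (y' s) s ∧ ⟪y s, y' s⟫_ℝ ≤ -c * ‖y s‖ ^ (2 - α)) :
    ‖y b‖ ^ α ≤ ‖y a‖ ^ α - α * c * (b - a) := by
  have hslope : ∀ s ∈ interior (Icc a b),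
      HasDerivAt (fun s => ‖y s‖ ^ α) (α * ‖y s‖ ^ (α - 2) * ⟪y s, y' s⟫_ℝ) s ∧
        α * ‖y s‖ ^ (α - 2) * ⟪y s, y' s⟫_ℝ ≤ -(α * c) := by
    intro s hs
    rw [interior_Icc] at hs
    obtain ⟨hys, hdy, hinner⟩ := hderiv s hs
    have hys' : 0 < ‖y s‖ := norm_pos_iff.mpr hys
    refine ⟨hdy.norm_rpow α hys, ?_⟩
    calc α * ‖y s‖ ^ (α - 2) * ⟪y s, y' s⟫_ℝ
        ≤ α * ‖y s‖ ^ (α - 2) * (-c * ‖y s‖ ^ (2 - α)) := by gcongr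
      _ = -(α * c) * ‖y s‖ ^ (α - 2 + (2 - α)) := by rw [rpow_add hys']; ring
      _ = -(α * c) := by norm_num
  have hmvt := (convex_Icc a b).image_sub_le_mul_sub_of_deriv_le
    (hy.norm.rpow_const fun _ _ => Or.inr hα.le)
    (fun s hs => (hslope s hs).1.differentiableAt.differentiableWithinAt)
    (fun s hs => (hslope s hs).1.deriv ▸ (hslope s hs).2)
    a (left_mem_Icc.2 hab) b (right_mem_Icc.2 hab) hab
  linarith

end InnerProductSpace

theorem forall_mem_Icc_lt_of_forall_Ico_lt {u : ℝ → ℝ} {a b R : ℝ}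
    (hu : ContinuousOn u (Icc a b))
    (hstep : ∀ τ ∈ Icc a b, (∀ s ∈ Ico a τ, u s < R) → u τ < R) :
    ∀ t ∈ Icc a b, u t < R := by
  by_contra! hexit
  obtain ⟨t, ht, hRt⟩ := hexit
  have hclosed : IsClosed (Icc a b ∩ u ⁻¹' Ici R) :=
    hu.preimage_isClosed_of_isClosed isClosed_Icc isClosed_Ici
  have hbdd : BddBelow (Icc a b ∩ u ⁻¹' Ici R) := ⟨a, fun s hs => hs.1.1⟩
  have hfirst := hclosed.csInf_mem ⟨t, ht, hRt⟩ hbdd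
  refine not_lt.2 hfirst.2 (hstep _ hfirst.1 fun s hs => ?_)
  by_contra! hRs
  exact not_le.2 hs.2 (csInf_le hbdd ⟨⟨hs.1, hs.2.le.trans hfirst.1.2⟩, hRs⟩)

theorem small_solutions_decrease_general (n : ℕ)
    (A : Matrix (Fin n) (Fin n) ℝ)
    (Λ₁ : ℝ) (hΛ₁ : 0 < Λ₁)
    (hcoer : ∀ x : EuclideanSpace ℝ (Fin n), Λ₁ * ‖x‖ ^ 2 ≤ (inner ℝ x (mulVecE A x) : ℝ))
    (α : ℝ) (hα : 0 < α)
    (H : EuclideanSpace ℝ (Fin n) → ℝ)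
    (hHhom : ∀ x : EuclideanSpace ℝ (Fin n), x ≠ 0 → ∀ s : ℝ, 0 < s →
      H (s • x) = s ^ (-α) * H x)
    (c₁ : ℝ) (hc₁pos : 0 < c₁)
    (hc₁le : ∀ x : EuclideanSpace ℝ (Fin n), ‖x‖ = 1 → c₁ ≤ H x)
    (t₀ : ℝ)
    (G : ℝ → EuclideanSpace ℝ (Fin n) → EuclideanSpace ℝ (Fin n))
    (cs rs δ : ℝ) (hcs : 0 < cs) (hδ : 0 < δ)
    (hG : ∀ t, t₀ ≤ t → ∀ x : EuclideanSpace ℝ (Fin n), x ≠ 0 → ‖x‖ ≤ rs →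
      ‖G t x‖ ≤ cs * ‖x‖ ^ (1 - α + δ))
    (r₀ : ℝ) (hr₀pos : 0 < r₀)
    (hr₀1 : cs * (2 * r₀) ^ δ ≤ c₁ * Λ₁ / 2) (hr₀2 : 2 * r₀ ≤ rs) :
    ∀ I : Set ℝ, ((∃ T : ℝ, t₀ < T ∧ I = Ico t₀ T) ∨ I = Ici t₀) →
    ∀ y : ℝ → EuclideanSpace ℝ (Fin n),
      ContinuousOn y I →
      (∀ t ∈ I, y t ≠ 0) →
      ‖y t₀‖ ≤ r₀ →
      (∀ t ∈ interior I, HasDerivAt y (-(H (y t)) • mulVecE A (y t) + G t (y t)) t) →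
      ∀ t ∈ I, ‖y t‖ < 2 * r₀ ∧
        ‖y t‖ ^ α ≤ ‖y t₀‖ ^ α - α * (c₁ * Λ₁ / 2) * (t - t₀) := by
  intro I hI y hycont hyne hy0 hyderiv
  have hIcc : ∀ t ∈ I, t₀ ≤ t ∧ Icc t₀ t ⊆ I := by
    rcases hI with ⟨T, -, rfl⟩ | rfl
    · exact fun t ht => ⟨ht.1, fun s hs => ⟨hs.1, hs.2.trans_lt ht.2⟩⟩
    · exact fun t ht => ⟨ht, fun s hs => hs.1⟩
  have hdecay : ∀ t ∈ I, (∀ s ∈ Ioo t₀ t, ‖y s‖ ≤ 2 * r₀) →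
      ‖y t‖ ^ α ≤ ‖y t₀‖ ^ α - α * (c₁ * Λ₁ / 2) * (t - t₀) := by
    intro t ht hsmall
    obtain ⟨ht₀t, hsub⟩ := hIcc t ht
    refine norm_rpow_le_of_inner_deriv_le (y' := fun s => -(H (y s)) • mulVecE A (y s) + G s (y s))
      hα ht₀t (hycont.mono hsub) fun s hs => ?_
    have hsI : s ∈ interior I := interior_mono hsub (by rwa [interior_Icc])
    have hys := hyne s (interior_subset hsI)
    refine ⟨hys, hyderiv s hsI, inner_neg_smul_add_le hys hc₁pos.le hΛ₁.le
      (mul_norm_rpow_neg_le_of_homogeneous hHhom hc₁le hys) (hcoer _)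
      (hG s hs.1.le _ hys ((hsmall s hs).trans hr₀2)) ?_⟩
    exact (mul_le_mul_of_nonneg_left (by gcongr; exact hsmall s hs) hcs.le).trans hr₀1
  have hsmall : ∀ t ∈ I, ‖y t‖ < 2 * r₀ := by
    intro t ht
    obtain ⟨ht₀t, hsub⟩ := hIcc t ht
    refine forall_mem_Icc_lt_of_forall_Ico_lt (hycont.mono hsub).norm (fun τ hτ hlt => ?_) t
      (right_mem_Icc.2 ht₀t)
    have hdecay_τ := hdecay τ (hsub hτ) fun s hs => (hlt s (Ioo_subset_Ico_self hs)).le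
    have hle : ‖y τ‖ ^ α ≤ ‖y t₀‖ ^ α := by
      nlinarith [mul_nonneg (by positivity : 0 ≤ α * (c₁ * Λ₁ / 2)) (sub_nonneg.2 hτ.1)]
    rw [rpow_le_rpow_iff (norm_nonneg _) (norm_nonneg _) hα] at hle
    linarith
  exact fun t ht =>
    ⟨hsmall t ht, hdecay t ht fun s hs => (hsmall s ((hIcc t ht).2 (Ioo_subset_Icc_self hs))).le⟩

theorem small_solutions_decrease (n : ℕ) (hn : 1 ≤ n)
    (A : Matrix (Fin n) (Fin n) ℝ) (hAsymm : A.IsSymm)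
    (Λ₁ : ℝ) (hΛ₁ : 0 < Λ₁)
    (hcoer : ∀ x : EuclideanSpace ℝ (Fin n), Λ₁ * ‖x‖ ^ 2 ≤ (inner ℝ x (mulVecE A x) : ℝ))
    (α : ℝ) (hα : 0 < α)
    (H : EuclideanSpace ℝ (Fin n) → ℝ)
    (hHhom : ∀ x : EuclideanSpace ℝ (Fin n), x ≠ 0 → ∀ s : ℝ, 0 < s →
      H (s • x) = s ^ (-α) * H x)
    (hHpos : ∀ x : EuclideanSpace ℝ (Fin n), ‖x‖ = 1 → 0 < H x)
    (hHcont : ContinuousOn H (Metric.sphere (0 : EuclideanSpace ℝ (Fin n)) 1))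
    (c₁ : ℝ) (hc₁pos : 0 < c₁)
    (hc₁le : ∀ x : EuclideanSpace ℝ (Fin n), ‖x‖ = 1 → c₁ ≤ H x)
    (hc₁min : ∃ x : EuclideanSpace ℝ (Fin n), ‖x‖ = 1 ∧ H x = c₁)
    (t₀ : ℝ) (ht₀ : 0 ≤ t₀)
    (G : ℝ → EuclideanSpace ℝ (Fin n) → EuclideanSpace ℝ (Fin n))
    (hGcont : ContinuousOn (fun p : ℝ × EuclideanSpace ℝ (Fin n) => G p.1 p.2)
      ((Ici t₀) ×ˢ {x : EuclideanSpace ℝ (Fin n) | x ≠ 0}))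
    (cs rs δ : ℝ) (hcs : 0 < cs) (hrs : 0 < rs) (hδ : 0 < δ)
    (hG : ∀ t, t₀ ≤ t → ∀ x : EuclideanSpace ℝ (Fin n), x ≠ 0 → ‖x‖ ≤ rs →
      ‖G t x‖ ≤ cs * ‖x‖ ^ (1 - α + δ))
    (r₀ : ℝ) (hr₀pos : 0 < r₀)
    (hr₀1 : cs * (2 * r₀) ^ δ ≤ c₁ * Λ₁ / 2) (hr₀2 : 2 * r₀ ≤ rs) :
    ∀ I : Set ℝ, ((∃ T : ℝ, t₀ < T ∧ I = Ico t₀ T) ∨ I = Ici t₀) →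
    ∀ y : ℝ → EuclideanSpace ℝ (Fin n),
      ContinuousOn y I →
      (∀ t ∈ I, y t ≠ 0) →
      ‖y t₀‖ ≤ r₀ →
      (∀ t ∈ interior I, HasDerivAt y (-(H (y t)) • mulVecE A (y t) + G t (y t)) t) →
      ∀ t ∈ I, ‖y t‖ < 2 * r₀ ∧
        ‖y t‖ ^ α ≤ ‖y t₀‖ ^ α - α * (c₁ * Λ₁ / 2) * (t - t₀) :=
  small_solutions_decrease_general n A Λ₁ hΛ₁ hcoer α hα H hHhom c₁ hc₁pos hc₁le t₀ G cs rs δ hcs hδ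
    hG r₀ hr₀pos hr₀1 hr₀2
end
end
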